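/- For even n, b_4(n) ≤ 2·b_4(n/2) + h(n/2, n/2) + 2·b_3(n/2), where b_r(n) is the odd cover number of K_n^(r) and h is the product odd cover number. More generally the same holds covering K_n^(4) by splitting the vertex set into two equal halves and odd-covering the 4-sets by their intersection pattern with the halves. -/

import Mathlib

open Finset

/-- `e` is an edge of the complete `r`-partite `r`-graph with parts `P 0, ..., P (r-1)`:
it meets every part in exactly one vertex. -/
def IsEdge {α : Type*} [DecidableEq α] {r : ℕ} (P : Fin r → Finset α) (e : Finset α) : Prop :=
  ∀ i, (e ∩ P i).card = 1

instance {α : Type*} [DecidableEq α] {r : ℕ} (P : Fin r → Finset α) (e : Finset α) :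
    Decidable (IsEdge P e) :=
  inferInstanceAs (Decidable (∀ _, _))

/-- The family `H` of complete `r`-partite `r`-graphs (each given by `r` pairwise disjoint
parts inside `V`) is an odd cover of the complete `r`-graph on `V`: every `r`-subset of `V`
is an edge of an odd number of members. -/
def IsOddCoverOn {α : Type*} [DecidableEq α] (V : Finset α) {r m : ℕ}
    (H : Fin m → Fin r → Finset α) : Prop :=
  (∀ i j, H i j ⊆ V) ∧
  (∀ i, Pairwise (Function.onFun Disjoint (H i))) ∧
  ∀ e ⊆ V, e.card = r → Odd ((Finset.univ.filter fun i => IsEdge (H i) e)).card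

/-- `oddCoverNumber r n` is the odd cover number `b_r(n)` of `K_n^(r)`. -/
noncomputable def oddCoverNumber (r n : ℕ) : ℕ :=
  sInf {m | ∃ H : Fin m → Fin r → Finset (Fin n), IsOddCoverOn Finset.univ H}

/-- `h(m,n)`: the minimum number of products of complete bipartite graphs needed so that each
element of `E(K_m) × E(K_n)` belongs to an odd number of them. -/
noncomputable def prodOddCoverNumber (m n : ℕ) : ℕ :=
  sInf {s | ∃ P : Fin s → ((Fin 2 → Finset (Fin m)) × (Fin 2 → Finset (Fin n))),
    (∀ i, Pairwise (Function.onFun Disjoint (P i).1) ∧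
          Pairwise (Function.onFun Disjoint (P i).2)) ∧
    ∀ e : Finset (Fin m), ∀ f : Finset (Fin n), e.card = 2 → f.card = 2 →
      Odd ((Finset.univ.filter fun i => IsEdge (P i).1 e ∧ IsEdge (P i).2 f).card)}

/-!
Split the vertex set as `Fin m ⊕ Fin n` and sort the 4-sets `e` by `k = #e.toLeft`. Joining an odd
cover of the `k`-sets on the left with one of the `(4 - k)`-sets on the right (a product odd cover
for `k = 2`, and the one-part graph `univ` or the zero-part graph on a side meeting `e` in at most
one vertex) gives complete 4-partite 4-graphs in which exactly the 4-sets of type `k` are covered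
an odd number of times: a graph with `a` parts on the left only has edges with at least `a`
vertices there, so a 4-set of another type is never an edge. The five families together odd-cover
every 4-set.
-/

open Function

variable {α β ι κ : Type*}

theorem card_filter_comp_equiv [Fintype ι] [Fintype κ] (τ : κ ≃ ι) (p : ι → Prop)
    [DecidablePred p] : #{k | p (τ k)} = #{i | p i} := by
  simp only [card_filter]
  exact τ.sum_comp fun i => if p i then 1 else 0

section IsEdge
variable [DecidableEq α] {r : ℕ}

theorem IsEdge.card_le {Q : Fin r → Finset α} (hQ : Pairwise (Disjoint on Q)) {e : Finset α}
    (h : IsEdge Q e) : r ≤ #e :=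
  calc r = ∑ j, #(e ∩ Q j) := by simp [h _]
    _ = #(univ.biUnion fun j => e ∩ Q j) :=
      (card_biUnion fun i _ j _ hij => (hQ hij).mono inter_subset_right inter_subset_right).symm
    _ ≤ #e := card_le_card (biUnion_subset.2 fun _ _ => inter_subset_left)

theorem isEdge_map_equiv [DecidableEq β] (σ : α ≃ β) (Q : Fin r → Finset α) (e : Finset β) :
    IsEdge (fun j => (Q j).map σ.toEmbedding) e ↔ IsEdge Q (e.map σ.symm.toEmbedding) := by
  refine forall_congr' fun j => ?_
  rw [← card_map σ.symm.toEmbedding, map_inter, map_map]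
  simp

end IsEdge

section OddCovers
variable [DecidableEq α] {r : ℕ}

def OddCovers [Fintype ι] (H : ι → Fin r → Finset α) (S : Set (Finset α)) : Prop :=
  (∀ i, Pairwise (Disjoint on H i)) ∧
    ∀ e : Finset α, #e = r → (Odd #{i | IsEdge (H i) e} ↔ e ∈ S)

theorem IsOddCoverOn.oddCovers [Fintype α] {m : ℕ} {H : Fin m → Fin r → Finset α}
    (hH : IsOddCoverOn univ H) : OddCovers H Set.univ :=
  ⟨hH.2.1, fun e he => iff_of_true (hH.2.2 e (subset_univ e) he) trivial⟩

theorem OddCovers.univ_of_forall_mem [Fintype ι] {H : ι → Fin r → Finset α}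
    {S : Set (Finset α)} (hH : OddCovers H S) (hS : ∀ e : Finset α, #e = r → e ∈ S) :
    OddCovers H Set.univ :=
  ⟨hH.1, fun e he => iff_of_true ((hH.2 e he).2 (hS e he)) trivial⟩

theorem OddCovers.sumElim [Fintype ι] [Fintype κ] {H₁ : ι → Fin r → Finset α}
    {H₂ : κ → Fin r → Finset α} {S₁ S₂ : Set (Finset α)} (h₁ : OddCovers H₁ S₁)
    (h₂ : OddCovers H₂ S₂) (hS : Disjoint S₁ S₂) : OddCovers (Sum.elim H₁ H₂) (S₁ ∪ S₂) := by
  refine ⟨Sum.rec h₁.1 h₂.1, fun e he => ?_⟩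
  have hcount : #{x | IsEdge (Sum.elim H₁ H₂ x) e} =
      #{i | IsEdge (H₁ i) e} + #{k | IsEdge (H₂ k) e} := by
    simp only [card_filter, Fintype.sum_sum_type, Sum.elim_inl, Sum.elim_inr]
    rfl
  have : e ∈ S₁ → e ∉ S₂ := fun h => Set.disjoint_left.mp hS h
  rw [hcount, Nat.odd_add, ← Nat.not_odd_iff_even, h₁.2 e he, h₂.2 e he, Set.mem_union]
  tauto

end OddCovers

section Join
variable {a b : ℕ}

def joinParts (Q : Fin a → Finset α) (R : Fin b → Finset β) : Fin (a + b) → Finset (α ⊕ β) :=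
  Fin.append (fun j => (Q j).disjSum ∅) (fun j => (∅ : Finset α).disjSum (R j))

theorem card_inter_disjSum [DecidableEq α] [DecidableEq β] (e : Finset (α ⊕ β)) (s : Finset α)
    (t : Finset β) :
    #(e ∩ s.disjSum t) = #(e.toLeft ∩ s) + #(e.toRight ∩ t) := by
  rw [← card_toLeft_add_card_toRight, toLeft_inter, toRight_inter, toLeft_disjSum,
    toRight_disjSum]

theorem isEdge_joinParts [DecidableEq α] [DecidableEq β] {Q : Fin a → Finset α}
    {R : Fin b → Finset β} {e : Finset (α ⊕ β)} :
    IsEdge (joinParts Q R) e ↔ IsEdge Q e.toLeft ∧ IsEdge R e.toRight := by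
  simp only [IsEdge, Fin.forall_fin_add, joinParts, Fin.append_left, Fin.append_right,
    card_inter_disjSum, inter_empty, card_empty, add_zero, zero_add]

theorem pairwise_disjoint_joinParts {Q : Fin a → Finset α} {R : Fin b → Finset β}
    (hQ : Pairwise (Disjoint on Q)) (hR : Pairwise (Disjoint on R)) :
    Pairwise (Disjoint on joinParts Q R) := by
  intro i j hij
  induction i using Fin.addCases <;> induction j using Fin.addCases <;>
    simp only [onFun, joinParts, Fin.append_left, Fin.append_right, disjSum_empty,
      empty_disjSum, disjoint_map]
  · exact hQ fun h => hij (congrArg _ h)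
  · exact disjoint_map_inl_map_inr _ _
  · exact (disjoint_map_inl_map_inr _ _).symm
  · exact hR fun h => hij (congrArg _ h)

theorem oddCovers_joinParts [DecidableEq α] [DecidableEq β] [Fintype ι]
    {Q : ι → Fin a → Finset α} {R : ι → Fin b → Finset β}
    (hQ : ∀ i, Pairwise (Disjoint on Q i)) (hR : ∀ i, Pairwise (Disjoint on R i))
    (hodd : ∀ f g, #f = a → #g = b → Odd #{i | IsEdge (Q i) f ∧ IsEdge (R i) g}) :
    OddCovers (fun i => joinParts (Q i) (R i)) {e | #e.toLeft = a} := by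
  refine ⟨fun i => pairwise_disjoint_joinParts (hQ i) (hR i), fun e he => ?_⟩
  have hsplit := card_toLeft_add_card_toRight (u := e)
  simp only [isEdge_joinParts, Set.mem_ofPred_eq]
  refine ⟨fun h => ?_, fun ha => hodd _ _ ha (by omega)⟩
  obtain ⟨i, hi⟩ := card_pos.1 h.pos
  have hiQ := (mem_filter.1 hi).2.1.card_le (hQ i)
  have hiR := (mem_filter.1 hi).2.2.card_le (hR i)
  omega

theorem oddCovers_joinParts_const [DecidableEq α] [DecidableEq β] [Fintype ι]
    {Q : ι → Fin a → Finset α} (hQ : OddCovers Q Set.univ) {R₀ : Fin b → Finset β}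
    (hR₀ : Pairwise (Disjoint on R₀)) (hR₀e : ∀ g, #g = b → IsEdge R₀ g) :
    OddCovers (fun i => joinParts (Q i) R₀) {e | #e.toLeft = a} :=
  oddCovers_joinParts hQ.1 (fun _ => hR₀) fun f g hf hg => by
    simpa only [hR₀e g hg, and_true] using (hQ.2 f hf).2 trivial

theorem oddCovers_const_joinParts [DecidableEq α] [DecidableEq β] [Fintype ι]
    {Q₀ : Fin a → Finset α} (hQ₀ : Pairwise (Disjoint on Q₀)) (hQ₀e : ∀ f, #f = a → IsEdge Q₀ f)
    {R : ι → Fin b → Finset β} (hR : OddCovers R Set.univ) :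
    OddCovers (fun i => joinParts Q₀ (R i)) {e | #e.toLeft = a} :=
  oddCovers_joinParts (fun _ => hQ₀) hR.1 fun f g hf hg => by
    simpa only [hQ₀e f hf, true_and] using (hR.2 g hg).2 trivial

end Join

section Transport
variable [DecidableEq α] {r n : ℕ}

theorem exists_isOddCoverOn_of_oddCovers [Fintype ι] {H : ι → Fin r → Finset α}
    (hH : OddCovers H Set.univ) (σ : α ≃ Fin n) :
    ∃ H' : Fin (Fintype.card ι) → Fin r → Finset (Fin n), IsOddCoverOn univ H' := by
  set τ := Fintype.equivFin ι
  refine ⟨fun k j => (H (τ.symm k) j).map σ.toEmbedding, fun _ _ => subset_univ _,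
    fun k i j hij => (disjoint_map _).2 (hH.1 _ hij), fun e _ he => ?_⟩
  simp only [isEdge_map_equiv]
  rw [card_filter_comp_equiv τ.symm fun i => IsEdge (H i) (e.map σ.symm.toEmbedding)]
  exact (hH.2 _ (by rwa [card_map])).2 trivial

theorem oddCoverNumber_le_of_oddCovers [Fintype ι] {H : ι → Fin r → Finset α}
    (hH : OddCovers H Set.univ) (σ : α ≃ Fin n) : oddCoverNumber r n ≤ Fintype.card ι :=
  Nat.sInf_le (exists_isOddCoverOn_of_oddCovers hH σ)

end Transport

section Singleton
variable {r : ℕ}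

noncomputable def singletonParts (e : Finset α) (he : #e = r) : Fin r → Finset α :=
  fun j => {((e.equivFinOfCardEq he).symm j : α)}

theorem pairwise_disjoint_singletonParts (e : Finset α) (he : #e = r) :
    Pairwise (Disjoint on singletonParts e he) := fun i j hij => by
  simpa [onFun, singletonParts, Subtype.val_inj] using hij

theorem isEdge_singletonParts_iff [DecidableEq α] {e f : Finset α} (he : #e = r) (hf : #f = r) :
    IsEdge (singletonParts e he) f ↔ f = e := by
  have hsub : IsEdge (singletonParts e he) f ↔ e ⊆ f := by
    simp only [IsEdge, singletonParts, inter_singleton]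
    rw [← (e.equivFinOfCardEq he).forall_congr_right]
    simp [apply_ite card, subset_iff]
  rw [hsub]
  exact ⟨fun h => (eq_of_subset_of_card_le h (by omega)).symm, fun h => h ▸ subset_rfl⟩

theorem card_filter_isEdge_singletonParts [DecidableEq α] [Fintype α] {f : Finset α}
    (hf : #f = r) : #{e : {e : Finset α // #e = r} | IsEdge (singletonParts e.1 e.2) f} = 1 := by
  rw [card_eq_one]
  refine ⟨⟨f, hf⟩, ?_⟩
  ext e
  simp [isEdge_singletonParts_iff e.2 hf, Subtype.ext_iff, eq_comm]

theorem oddCovers_singletonParts [DecidableEq α] [Fintype α] :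
    OddCovers (fun e : {e : Finset α // #e = r} => singletonParts e.1 e.2) Set.univ :=
  ⟨fun e => pairwise_disjoint_singletonParts e.1 e.2, fun _ hf =>
    iff_of_true (by rw [card_filter_isEdge_singletonParts hf]; exact odd_one) trivial⟩

end Singleton

theorem exists_isOddCoverOn (r n : ℕ) :
    ∃ H : Fin (oddCoverNumber r n) → Fin r → Finset (Fin n), IsOddCoverOn univ H :=
  Nat.sInf_mem (s := {m | ∃ H : Fin m → Fin r → Finset (Fin n), IsOddCoverOn univ H})
    ⟨_, exists_isOddCoverOn_of_oddCovers oddCovers_singletonParts (Equiv.refl _)⟩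

theorem exists_prodOddCover (m n : ℕ) :
    ∃ P : Fin (prodOddCoverNumber m n) → (Fin 2 → Finset (Fin m)) × (Fin 2 → Finset (Fin n)),
      (∀ i, Pairwise (Disjoint on (P i).1) ∧ Pairwise (Disjoint on (P i).2)) ∧
      ∀ e : Finset (Fin m), ∀ f : Finset (Fin n), #e = 2 → #f = 2 →
        Odd #{i | IsEdge (P i).1 e ∧ IsEdge (P i).2 f} := by
  set τ := Fintype.equivFin ({e : Finset (Fin m) // #e = 2} × {f : Finset (Fin n) // #f = 2})
  refine Nat.sInf_mem (s := {s | ∃ P : Fin s → _, _}) ⟨_, fun k =>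
      (singletonParts (τ.symm k).1.1 (τ.symm k).1.2, singletonParts (τ.symm k).2.1 (τ.symm k).2.2),
    fun k => ⟨pairwise_disjoint_singletonParts _ _, pairwise_disjoint_singletonParts _ _⟩,
    fun e f he hf => ?_⟩
  rw [card_filter_comp_equiv τ.symm fun x =>
      IsEdge (singletonParts x.1.1 x.1.2) e ∧ IsEdge (singletonParts x.2.1 x.2.2) f,
    ← univ_product_univ,
    filter_product (fun x : {e : Finset (Fin m) // #e = 2} => IsEdge (singletonParts x.1 x.2) e)
      (fun y : {f : Finset (Fin n) // #f = 2} => IsEdge (singletonParts y.1 y.2) f),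
    card_product, card_filter_isEdge_singletonParts he,
    card_filter_isEdge_singletonParts hf]
  exact odd_one

theorem oddCoverNumber_four_add_le (m n : ℕ) :
    oddCoverNumber 4 (m + n) ≤ oddCoverNumber 4 m + oddCoverNumber 3 m +
      prodOddCoverNumber m n + oddCoverNumber 3 n + oddCoverNumber 4 n := by
  obtain ⟨HA, hHA⟩ := exists_isOddCoverOn 4 m
  obtain ⟨GA, hGA⟩ := exists_isOddCoverOn 3 m
  obtain ⟨P, hP, hPodd⟩ := exists_prodOddCover m n
  obtain ⟨GB, hGB⟩ := exists_isOddCoverOn 3 n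
  obtain ⟨HB, hHB⟩ := exists_isOddCoverOn 4 n
  have h4 := oddCovers_joinParts_const hHA.oddCovers
    (R₀ := (Fin.elim0 : Fin 0 → Finset (Fin n))) Subsingleton.pairwise fun _ _ j => j.elim0
  have h3 := oddCovers_joinParts_const hGA.oddCovers
    (R₀ := fun _ => (univ : Finset (Fin n))) Subsingleton.pairwise fun _ _ _ => by rwa [inter_univ]
  have h2 := oddCovers_joinParts (fun i => (hP i).1) (fun i => (hP i).2) hPodd
  have h1 := oddCovers_const_joinParts (Q₀ := fun _ => (univ : Finset (Fin m)))
    Subsingleton.pairwise (fun _ _ _ => by rwa [inter_univ]) hGB.oddCovers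
  have h0 := oddCovers_const_joinParts (Q₀ := (Fin.elim0 : Fin 0 → Finset (Fin m)))
    Subsingleton.pairwise (fun _ _ j => j.elim0) hHB.oddCovers
  refine (oddCoverNumber_le_of_oddCovers ((h4.sumElim (h3.sumElim (h2.sumElim
    (h1.sumElim h0 ?_) ?_) ?_) ?_).univ_of_forall_mem ?_) finSumFinEquiv).trans ?_
  any_goals
    refine Set.disjoint_left.2 fun e h h' => ?_
    simp only [Set.mem_union, Set.mem_ofPred_eq] at h h'
    omega
  · intro e he
    have := card_toLeft_le (u := e)
    simp only [Set.mem_union, Set.mem_ofPred_eq]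
    omega
  · simp only [Fintype.card_sum, Fintype.card_fin]
    omega

theorem stmt15 (n : ℕ) (hn : Even n) :
    oddCoverNumber 4 n ≤
      2 * oddCoverNumber 4 (n / 2) + prodOddCoverNumber (n / 2) (n / 2) +
        2 * oddCoverNumber 3 (n / 2) := by
  obtain ⟨t, rfl⟩ := hn
  have := oddCoverNumber_four_add_le t t
  rw [show (t + t) / 2 = t by omega]
  omega
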